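/- arXiv:2002.09073 — 2 statements merged into one kernel-verified Lean document; each statement's English description precedes it below -/
import Mathlib

section
/- Random-size DPP error and size bound at a tuned rescaling. Let A be an m×n real matrix, 0 ≤ ε < 1, and let integers s, k satisfy 0 ≤ s < rank(A) and s < k < t_s, where t_s = s + sr_s(A). Set γ_s(k) = sqrt(1 + 2(k−s)/(t_s − k)) and α = γ_s(k)·OPT_k/((1−ε)(k−s)). If S ~ DPP((1/α)AᵀA), then E[Er_A(S)] ≤ (1 + s/(k−s))·γ_s(k)·OPT_k/(1−ε), and E[|S|] ≤ k − ε·(k−s)/γ_s(k). -/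
open scoped BigOperators
open Matrix

namespace CSSP

variable {m n : ℕ}

/-- The `j`-th column of `A` as a vector in Euclidean space. -/
noncomputable def col {ι : Type*} (A : Matrix (Fin m) ι ℝ) (j : ι) :
    EuclideanSpace ℝ (Fin m) := WithLp.toLp 2 (fun i => A i j)

/-- The span of the columns of `A` indexed by `S`. -/
noncomputable def colSpan {ι : Type*} (A : Matrix (Fin m) ι ℝ) (S : Finset ι) :
    Submodule ℝ (EuclideanSpace ℝ (Fin m)) :=
  Submodule.span ℝ {x | ∃ j ∈ S, x = col A j}

/-- `Er_A(S) = ‖A - P_S A‖_F²`, the squared Frobenius norm of the residual of projecting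
the columns of `A` onto the span of the columns indexed by `S`. -/
noncomputable def Er {ι : Type*} [Fintype ι] (A : Matrix (Fin m) ι ℝ) (S : Finset ι) : ℝ :=
  ∑ j, ‖col A j - ((colSpan A S).orthogonalProjectionOnto (col A j) : EuclideanSpace ℝ (Fin m))‖ ^ 2

/-- Principal subdeterminant `det K_{S,S}`. -/
noncomputable def pdet (K : Matrix (Fin n) (Fin n) ℝ) (S : Finset (Fin n)) : ℝ :=
  (K.submatrix (fun i : {x : Fin n // x ∈ S} => (i : Fin n))
    (fun i : {x : Fin n // x ∈ S} => (i : Fin n))).det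

/-- Expectation of `f` under the `k`-DPP with kernel `AᵀA`. -/
noncomputable def kDPPExp (A : Matrix (Fin m) (Fin n) ℝ) (k : ℕ)
    (f : Finset (Fin n) → ℝ) : ℝ :=
  (∑ S ∈ Finset.univ.filter (fun S : Finset (Fin n) => S.card = k), pdet (Aᵀ * A) S * f S) /
    (∑ S ∈ Finset.univ.filter (fun S : Finset (Fin n) => S.card = k), pdet (Aᵀ * A) S)

/-- Expectation of `f` under the (random-size) DPP with kernel `(1/α)·AᵀA`. -/
noncomputable def dppExp (A : Matrix (Fin m) (Fin n) ℝ) (α : ℝ)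
    (f : Finset (Fin n) → ℝ) : ℝ :=
  (∑ S : Finset (Fin n), α⁻¹ ^ S.card * pdet (Aᵀ * A) S * f S) /
    (1 + α⁻¹ • (Aᵀ * A)).det

/-- `lam` is the (multi-)set of eigenvalues of the symmetric matrix `K`. -/
def IsEigs (K : Matrix (Fin n) (Fin n) ℝ) (lam : Fin n → ℝ) : Prop :=
  ∃ (hK : K.IsHermitian) (σ : Equiv.Perm (Fin n)), ∀ i, lam i = hK.eigenvalues (σ i)

/-- `OPT_k = Σ_{i > k} λ_i` (1-based indexing in the paper; `lam` here is 0-based). -/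
noncomputable def opt (lam : Fin n → ℝ) (k : ℕ) : ℝ :=
  ∑ i ∈ Finset.univ.filter (fun i : Fin n => k ≤ (i : ℕ)), lam i

/-- Stable rank of order `s`: `sr_s = (Σ_{i > s} λ_i)/λ_{s+1}`. -/
noncomputable def srank (lam : Fin n → ℝ) (s : ℕ) (h : s < n) : ℝ :=
  (∑ i ∈ Finset.univ.filter (fun i : Fin n => s ≤ (i : ℕ)), lam i) / lam ⟨s, h⟩

/-- Squared Frobenius norm. -/
noncomputable def frobSq {ι : Type*} [Fintype ι] (M : Matrix (Fin m) ι ℝ) : ℝ :=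
  ∑ i, ∑ j, M i j ^ 2

/-- The squared Frobenius error of the best rank-`k` approximation of `A`. -/
noncomputable def optRank {ι : Type*} [Fintype ι] [DecidableEq ι]
    (A : Matrix (Fin m) ι ℝ) (k : ℕ) : ℝ :=
  sInf {x | ∃ B : Matrix (Fin m) ι ℝ, B.rank ≤ k ∧ x = frobSq (A - B)}

/-!
Write `K = AᵀA` and `x = α⁻¹`. Expanding `det (1 + x K)` into principal minors identifies the
normaliser of the DPP with `∏ (1 + x λᵢ)`, and differentiating in `x` gives
`E|S| = ∑ λᵢ x / (1 + x λᵢ)`. The base-times-height formula for Gram determinants,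
`det K_{S ∪ {j}} = det K_S · ‖aⱼ - P_S aⱼ‖²`, turns `∑_S x^|S| det K_S · Er(S)` into
`α ∑_T x^|T| det K_T · |T|` by double counting the pairs `(S, j)`, so `E[Er(S)] = α E|S|`.

It remains to bound `∑ λᵢ x / (1 + x λᵢ)`: the terms are at most `1` for `i < s`, at most
`(γ - 1)/γ` for `s ≤ i < k` because the choice of `γ` makes `λ_{s+1}/α ≤ γ - 1`, and at most
`λᵢ/α` for `i ≥ k`, which add up to `(1 - ε)(k - s)/γ` by the choice of `α`.
-/

section PrincipalMinors

variable {R ι : Type*} [CommRing R] [Fintype ι] [DecidableEq ι]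

theorem det_one_add_smul_eq_sum_det_submatrix (K : Matrix ι ι R) (x : R) :
    (1 + x • K).det = ∑ S : Finset ι, x ^ S.card * (K.submatrix ((↑) : S → ι) (↑)).det := by
  have hrows : (1 + x • K).det =
      detRowAlternating.toMultilinearMap ((x • K).row + (1 : Matrix ι ι R).row) := by
    rw [add_comm]; rfl
  rw [hrows, MultilinearMap.map_add_univ]
  refine Finset.sum_congr rfl fun S _ => ?_
  rw [← Fintype.card_coe, ← det_smul]
  exact det_piecewise_one_eq_submatrix_det (x • K) S

end PrincipalMinors

theorem _root_.Matrix.IsHermitian.det_one_add_smul {ι : Type*} [Fintype ι] [DecidableEq ι]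
    {K : Matrix ι ι ℝ} (hK : K.IsHermitian) (x : ℝ) :
    (1 + x • K).det = ∏ i, (1 + x * hK.eigenvalues i) := by
  have hconj : 1 + x • K = Unitary.conjStarAlgAut ℝ _ hK.eigenvectorUnitary
      (diagonal fun i => 1 + x * hK.eigenvalues i) := by
    conv_lhs => rw [hK.spectral_theorem]
    rw [← map_one (Unitary.conjStarAlgAut ℝ _ hK.eigenvectorUnitary), ← map_smul, ← map_add]
    congr 1
    ext i j
    by_cases hij : i = j <;> simp [hij, one_apply]
  rw [hconj, Unitary.conjStarAlgAut_apply, det_mul_right_comm]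
  simp

theorem IsEigs.det_one_add_smul {K : Matrix (Fin n) (Fin n) ℝ} {lam : Fin n → ℝ}
    (h : IsEigs K lam) (x : ℝ) : (1 + x • K).det = ∏ i, (1 + lam i * x) := by
  obtain ⟨hK, σ, hσ⟩ := h
  rw [hK.det_one_add_smul, ← Equiv.prod_comp σ]
  simp only [hσ, mul_comm]

theorem IsEigs.nonneg_of_transpose_mul_self {A : Matrix (Fin m) (Fin n) ℝ} {lam : Fin n → ℝ}
    (h : IsEigs (Aᵀ * A) lam) (i : Fin n) : 0 ≤ lam i := by
  obtain ⟨hK, σ, hσ⟩ := h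
  rw [hσ]
  exact (posSemidef_conjTranspose_mul_self A).eigenvalues_nonneg _

section Gram

open RealInnerProductSpace

variable {ι κ E : Type*} [Fintype ι] [NormedAddCommGroup E] [InnerProductSpace ℝ E]

theorem gram_sum_smul (L : Matrix κ ι ℝ) (v : ι → E) :
    gram ℝ (fun b => ∑ p, L b p • v p) = L * gram ℝ v * Lᵀ := by
  ext b c
  simp only [gram_apply, mul_apply, transpose_apply, sum_inner, inner_sum, real_inner_smul_left,
    real_inner_smul_right, Finset.sum_mul]
  exact Finset.sum_congr rfl fun p _ => Finset.sum_congr rfl fun q _ => by ring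

theorem det_gram_sum_elim [DecidableEq ι] {v : ι → E} {x r : E}
    (hxr : x - r ∈ Submodule.span ℝ (Set.range v)) (hr : ∀ i, ⟪r, v i⟫ = 0) :
    (gram ℝ (Sum.elim v fun _ : Unit => x)).det = (gram ℝ v).det * ‖r‖ ^ 2 := by
  obtain ⟨c, hc⟩ := Submodule.mem_span_range_iff_exists_fun ℝ |>.mp hxr
  set L : Matrix (ι ⊕ Unit) (ι ⊕ Unit) ℝ := fromBlocks 1 0 (of fun _ i => c i) 1
  have hfamily : Sum.elim v (fun _ : Unit => x) =
      fun b => ∑ p, L b p • Sum.elim v (fun _ : Unit => r) p := by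
    ext (i | _) : 1
    · simp [L, Fintype.sum_sum_type, one_apply]
    · simp [L, Fintype.sum_sum_type, hc]
  have hblocks : gram ℝ (Sum.elim v fun _ : Unit => r) =
      fromBlocks (gram ℝ v) 0 0 (of fun _ _ : Unit => ‖r‖ ^ 2) := by
    ext (i | _) (j | _) <;> simp [gram_apply, hr, real_inner_comm r]
  have hL : L.det = 1 := by simp [L]
  rw [hfamily, gram_sum_smul, det_mul, det_mul, det_transpose, hL, hblocks,
    det_fromBlocks_zero₁₂]
  simp

end Gram

theorem _root_.Finset.sum_sum_compl_insert {α M : Type*} [Fintype α] [DecidableEq α]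
    [AddCommMonoid M] (F : Finset α → M) :
    ∑ S : Finset α, ∑ j ∈ Sᶜ, F (insert j S) = ∑ T : Finset α, T.card • F T := by
  simp only [← Finset.sum_const]
  rw [Finset.sum_sigma', Finset.sum_sigma']
  refine Finset.sum_nbij' (fun p => ⟨insert p.2 p.1, p.2⟩) (fun p => ⟨p.1.erase p.2, p.2⟩)
    ?_ ?_ ?_ ?_ fun _ _ => rfl
  · simp
  · simp
  · rintro ⟨S, j⟩ h
    simp_all
  · rintro ⟨T, j⟩ h
    simp_all [Finset.insert_erase]

section ColumnSubsets

variable (A : Matrix (Fin m) (Fin n) ℝ)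

theorem pdet_transpose_mul_self (S : Finset (Fin n)) :
    pdet (Aᵀ * A) S = (gram ℝ fun i : S => col A i).det := by
  unfold pdet
  congr 1
  ext i j
  simp [gram_apply, col, mul_apply, PiLp.inner_apply, mul_comm]

theorem colSpan_eq_span_range (S : Finset (Fin n)) :
    colSpan A S = Submodule.span ℝ (Set.range fun i : S => col A i) := by
  unfold colSpan
  congr 1
  ext x
  simp [eq_comm]

theorem col_mem_colSpan {S : Finset (Fin n)} {j : Fin n} (hj : j ∈ S) : col A j ∈ colSpan A S :=
  Submodule.subset_span ⟨j, hj, rfl⟩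

theorem pdet_insert {S : Finset (Fin n)} {j : Fin n} (hj : j ∉ S) :
    pdet (Aᵀ * A) (insert j S) = pdet (Aᵀ * A) S *
      ‖col A j - ((colSpan A S).orthogonalProjectionOnto (col A j) :
        EuclideanSpace ℝ (Fin m))‖ ^ 2 := by
  let e : S ⊕ Unit ≃ (insert j S : Finset (Fin n)) :=
    ((Finset.subtypeInsertEquivOption hj).trans (Equiv.optionEquivSumPUnit _)).symm
  have hgram : (gram ℝ fun i : (insert j S : Finset (Fin n)) => col A i).submatrix e e =
      gram ℝ (Sum.elim (fun i : S => col A i) fun _ => col A j) := by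
    ext (i | _) (k | _) <;> rfl
  rw [pdet_transpose_mul_self, pdet_transpose_mul_self, ← det_submatrix_equiv_self e, hgram]
  apply det_gram_sum_elim
  · rw [sub_sub_cancel, ← colSpan_eq_span_range]
    exact Submodule.coe_mem _
  · intro i
    exact Submodule.inner_left_of_mem_orthogonal (col_mem_colSpan A i.2)
      (Submodule.sub_starProjection_mem_orthogonal _)

theorem Er_eq_sum_compl (S : Finset (Fin n)) :
    Er A S = ∑ j ∈ Sᶜ,
      ‖col A j - ((colSpan A S).orthogonalProjectionOnto (col A j) :
        EuclideanSpace ℝ (Fin m))‖ ^ 2 := by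
  rw [Er, ← Finset.sum_add_sum_compl S, add_eq_right]
  refine Finset.sum_eq_zero fun j hj => ?_
  rw [sub_eq_zero_of_eq, norm_zero, zero_pow two_ne_zero]
  exact (Submodule.starProjection_eq_self_iff.mpr (col_mem_colSpan A hj)).symm

theorem mul_sum_pow_card_mul_pdet_mul_Er (x : ℝ) :
    x * ∑ S : Finset (Fin n), x ^ S.card * pdet (Aᵀ * A) S * Er A S =
      ∑ T : Finset (Fin n), x ^ T.card * pdet (Aᵀ * A) T * T.card := by
  have hterm (S : Finset (Fin n)) : x * (x ^ S.card * pdet (Aᵀ * A) S * Er A S) =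
      ∑ j ∈ Sᶜ, x ^ (insert j S).card * pdet (Aᵀ * A) (insert j S) := by
    rw [Er_eq_sum_compl, Finset.mul_sum, Finset.mul_sum]
    refine Finset.sum_congr rfl fun j hj => ?_
    rw [Finset.mem_compl] at hj
    rw [pdet_insert A hj, Finset.card_insert_of_notMem hj]
    ring
  rw [Finset.mul_sum]
  simp only [hterm]
  rw [Finset.sum_sum_compl_insert fun T => x ^ T.card * pdet (Aᵀ * A) T]
  exact Finset.sum_congr rfl fun T _ => by rw [nsmul_eq_mul]; ring

theorem dppExp_Er_eq_mul_dppExp_card {α : ℝ} (hα : α ≠ 0) :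
    dppExp A α (Er A) = α * dppExp A α (fun S => (S.card : ℝ)) := by
  rw [dppExp, dppExp, ← mul_sum_pow_card_mul_pdet_mul_Er, ← mul_div_assoc, ← mul_assoc,
    mul_inv_cancel₀ hα, one_mul]

end ColumnSubsets

section Size

open Polynomial

theorem IsEigs.sum_C_pdet_mul_X_pow_card {K : Matrix (Fin n) (Fin n) ℝ} {lam : Fin n → ℝ}
    (h : IsEigs K lam) :
    ∑ S : Finset (Fin n), C (pdet K S) * X ^ S.card = ∏ i, (1 + C (lam i) * X) := by
  refine Polynomial.funext fun x => ?_
  simp only [eval_finsetSum, eval_prod, eval_mul, eval_add, eval_pow, eval_C, eval_X, eval_one]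
  rw [← h.det_one_add_smul, det_one_add_smul_eq_sum_det_submatrix]
  exact Finset.sum_congr rfl fun S _ => mul_comm _ _

theorem mul_eval_derivative_prod_one_add_C_mul_X {ι : Type*} [Fintype ι] [DecidableEq ι]
    (a : ι → ℝ) {x : ℝ} (hx : ∀ i, 1 + a i * x ≠ 0) :
    x * (derivative (∏ i, (1 + C (a i) * X))).eval x =
      (∑ i, a i * x / (1 + a i * x)) * ∏ i, (1 + a i * x) := by
  simp only [derivative_prod_finset, derivative_add, derivative_one, derivative_C_mul_X, zero_add,
    eval_finsetSum, eval_mul, eval_prod, eval_add, eval_one, eval_C, eval_X, Finset.mul_sum,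
    Finset.sum_mul]
  refine Finset.sum_congr rfl fun i _ => ?_
  rw [← Finset.mul_prod_erase _ _ (Finset.mem_univ i)]
  have hxi : 1 + x * a i ≠ 0 := by rw [mul_comm]; exact hx i
  field_simp

theorem IsEigs.sum_pow_card_mul_pdet_mul_card {K : Matrix (Fin n) (Fin n) ℝ} {lam : Fin n → ℝ}
    (h : IsEigs K lam) {x : ℝ} (hx : ∀ i, 1 + lam i * x ≠ 0) :
    ∑ S : Finset (Fin n), x ^ S.card * pdet K S * S.card =
      (∑ i, lam i * x / (1 + lam i * x)) * ∏ i, (1 + lam i * x) := by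
  rw [← mul_eval_derivative_prod_one_add_C_mul_X lam hx, ← h.sum_C_pdet_mul_X_pow_card]
  simp only [derivative_sum, derivative_C_mul_X_pow, eval_finsetSum, eval_mul, eval_C, eval_pow,
    eval_X, Finset.mul_sum]
  refine Finset.sum_congr rfl fun S _ => ?_
  rcases Nat.eq_zero_or_pos S.card with hS | hS
  · simp [hS]
  · rw [← mul_pow_sub_one hS.ne' x]
    ring

theorem dppExp_card_eq_sum {A : Matrix (Fin m) (Fin n) ℝ} {lam : Fin n → ℝ}
    (h : IsEigs (Aᵀ * A) lam) {α : ℝ} (hα : 0 ≤ α) :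
    dppExp A α (fun S => (S.card : ℝ)) = ∑ i, lam i * α⁻¹ / (1 + lam i * α⁻¹) := by
  have hpos (i : Fin n) : 0 < 1 + lam i * α⁻¹ := by
    have := h.nonneg_of_transpose_mul_self i
    positivity
  rw [dppExp, h.sum_pow_card_mul_pdet_mul_card fun i => (hpos i).ne', h.det_one_add_smul]
  exact mul_div_cancel_right₀ _ (Finset.prod_pos fun i _ => hpos i).ne'

end Size

section Tuning

variable {lam : Fin n → ℝ} {s k : ℕ}

theorem lam_pos_of_lt_srank (hsn : s < n) (hnn : ∀ i, 0 ≤ lam i) (hsk : s < k)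
    (hkt : (k : ℝ) < s + srank lam s hsn) : 0 < lam ⟨s, hsn⟩ := by
  -- if `λ_s = 0` then `srank lam s = 0` by the convention `x / 0 = 0`, contradicting `s < k`
  refine (hnn _).lt_of_ne fun h0 => ?_
  rw [srank, ← h0, div_zero, add_zero] at hkt
  exact absurd hkt (by exact_mod_cast hsk.le.not_gt)

theorem sub_mul_le_opt (hsn : s < n) (hlam : Antitone lam) (hsk : s ≤ k)
    (hpos : 0 < lam ⟨s, hsn⟩) : (s + srank lam s hsn - k) * lam ⟨s, hsn⟩ ≤ opt lam k := by
  have hcard (j : ℕ) : ∑ i : Fin n, (if (i : ℕ) < j then lam ⟨s, hsn⟩ else 0) =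
      (min n j : ℕ) * lam ⟨s, hsn⟩ := by
    rw [Finset.sum_ite, Finset.sum_const_zero, add_zero, Finset.sum_const, nsmul_eq_mul,
      Fin.card_filter_val_lt]
  -- the indicator of `s ≤ i < k` is `[i < k] - [i < s]`, and `#{i | i < j} = min n j`
  have hpoint (i : Fin n) : (if s ≤ (i : ℕ) then lam i else 0) ≤
      (if (i : ℕ) < k then lam ⟨s, hsn⟩ else 0) - (if (i : ℕ) < s then lam ⟨s, hsn⟩ else 0) +
        (if k ≤ (i : ℕ) then lam i else 0) := by
    by_cases his : (i : ℕ) < s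
    · simp [his, his.trans_le hsk, his.not_ge, (his.trans_le hsk).not_ge]
    · have hsi : s ≤ (i : ℕ) := not_lt.mp his
      by_cases hik : (i : ℕ) < k
      · simpa [his, hsi, hik, hik.not_ge] using hlam (show (⟨s, hsn⟩ : Fin n) ≤ i from hsi)
      · simp [his, hsi, hik, not_lt.mp hik]
  have hsum := Finset.sum_le_sum fun i (_ : i ∈ Finset.univ) => hpoint i
  rw [Finset.sum_add_distrib, Finset.sum_sub_distrib, hcard, hcard, ← Finset.sum_filter,
    ← Finset.sum_filter, min_eq_right hsn.le] at hsum
  have hk : ((min n k : ℕ) : ℝ) ≤ k := by exact_mod_cast min_le_right n k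
  have hsrank : srank lam s hsn * lam ⟨s, hsn⟩ =
      ∑ i ∈ Finset.univ.filter (fun i : Fin n => s ≤ (i : ℕ)), lam i :=
    div_mul_cancel₀ _ hpos.ne'
  rw [opt]
  nlinarith

theorem sum_div_one_add_le (hnn : ∀ i, 0 ≤ lam i) {x c : ℝ} (hx : 0 ≤ x) (hc : 0 ≤ c)
    (hsk : s ≤ k) (hlc : ∀ i : Fin n, s ≤ (i : ℕ) → lam i * x ≤ c) :
    ∑ i, lam i * x / (1 + lam i * x) ≤ s + (k - s) * (c / (1 + c)) + x * opt lam k := by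
  set c' := c / (1 + c)
  have hc' : c' ≤ 1 := (div_le_one (by positivity)).mpr (by linarith)
  have hpoint (i : Fin n) : lam i * x / (1 + lam i * x) ≤
      (if (i : ℕ) < k then c' else 0) + (if (i : ℕ) < s then 1 - c' else 0) +
        (if k ≤ (i : ℕ) then x * lam i else 0) := by
    have ht : 0 ≤ lam i * x := mul_nonneg (hnn i) hx
    by_cases his : (i : ℕ) < s
    · simp only [his, his.trans_le hsk, (his.trans_le hsk).not_ge, if_true, if_false]
      rw [add_zero, add_sub_cancel, div_le_one (by positivity)]
      linarith
    · have hsi : s ≤ (i : ℕ) := not_lt.mp his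
      by_cases hik : (i : ℕ) < k
      · simp only [his, hik, hik.not_ge, if_true, if_false, add_zero]
        rw [div_le_div_iff₀ (by positivity) (by positivity)]
        nlinarith [hlc i hsi]
      · simp only [his, hik, not_lt.mp hik, if_true, if_false, zero_add]
        rw [mul_comm x]
        exact div_le_self ht (by linarith)
  have hcard (j : ℕ) (a : ℝ) :
      ∑ i : Fin n, (if (i : ℕ) < j then a else 0) = (min n j : ℕ) * a := by
    rw [Finset.sum_ite, Finset.sum_const_zero, add_zero, Finset.sum_const, nsmul_eq_mul,
      Fin.card_filter_val_lt]
  have hsum := Finset.sum_le_sum fun i (_ : i ∈ Finset.univ) => hpoint i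
  rw [Finset.sum_add_distrib, Finset.sum_add_distrib, hcard, hcard, ← Finset.sum_filter,
    ← Finset.mul_sum] at hsum
  have hk : ((min n k : ℕ) : ℝ) ≤ k := by exact_mod_cast min_le_right n k
  have hs : ((min n s : ℕ) : ℝ) ≤ s := by exact_mod_cast min_le_right n s
  rw [opt]
  nlinarith [div_nonneg hc (by positivity : (0 : ℝ) ≤ 1 + c)]

theorem le_sqrt_sub_one_mul_sqrt_mul {d τ : ℝ} (hd : 0 ≤ d) (hτ : 0 < τ) :
    d ≤ (√(1 + 2 * d / τ) - 1) * √(1 + 2 * d / τ) * τ := by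
  set γ := √(1 + 2 * d / τ)
  have hγ1 : 1 ≤ γ := Real.one_le_sqrt.mpr (by simp; positivity)
  have hd : 2 * d = (γ ^ 2 - 1) * τ := by
    rw [Real.sq_sqrt (by positivity)]
    field_simp
    ring
  -- `(γ - 1) γ τ - d = (γ - 1)² τ / 2`
  nlinarith [mul_nonneg (sq_nonneg (γ - 1)) hτ.le]

theorem opt_pos_of_lt_srank (hsn : s < n) (hlam : Antitone lam) (hnn : ∀ i, 0 ≤ lam i)
    (hsk : s < k) (hkt : (k : ℝ) < s + srank lam s hsn) : 0 < opt lam k := by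
  have hpos := lam_pos_of_lt_srank hsn hnn hsk hkt
  exact (mul_pos (sub_pos.mpr hkt) hpos).trans_le (sub_mul_le_opt hsn hlam hsk.le hpos)

theorem sum_div_one_add_le_of_tuning (hsn : s < n) (hlam : Antitone lam) (hnn : ∀ i, 0 ≤ lam i)
    {ε γ α : ℝ} (hε0 : 0 ≤ ε) (hε1 : ε < 1) (hsk : s < k)
    (hkt : (k : ℝ) < s + srank lam s hsn)
    (hγ : γ = √(1 + 2 * ((k : ℝ) - s) / ((s + srank lam s hsn) - k)))
    (hα : α = γ * opt lam k / ((1 - ε) * ((k : ℝ) - s))) :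
    ∑ i, lam i * α⁻¹ / (1 + lam i * α⁻¹) ≤ k - ε * (k - s) / γ := by
  have hks : (0 : ℝ) < k - s := sub_pos.mpr (by exact_mod_cast hsk)
  have hτ : 0 < (s + srank lam s hsn) - k := sub_pos.mpr hkt
  have hpos := lam_pos_of_lt_srank hsn hnn hsk hkt
  have hopt := sub_mul_le_opt hsn hlam hsk.le hpos
  have hopt_pos := opt_pos_of_lt_srank hsn hlam hnn hsk hkt
  have hγ1 : 1 ≤ γ := hγ ▸ Real.one_le_sqrt.mpr (by simp; positivity)
  have hαinv : α⁻¹ = (1 - ε) * (k - s) / (γ * opt lam k) := by rw [hα, inv_div]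
  have hkey : lam ⟨s, hsn⟩ * α⁻¹ ≤ γ - 1 := by
    have hgap := hγ ▸ le_sqrt_sub_one_mul_sqrt_mul hks.le hτ
    rw [hαinv, mul_div_assoc', div_le_iff₀ (by positivity)]
    have hγγ : 0 ≤ (γ - 1) * γ := by nlinarith
    nlinarith [mul_le_mul_of_nonneg_left hgap hpos.le, mul_le_mul_of_nonneg_left hopt hγγ,
      mul_nonneg (mul_nonneg hpos.le hε0) hks.le]
  have hx : 0 ≤ α⁻¹ := by rw [hαinv]; have := hε1; positivity
  refine (sum_div_one_add_le hnn hx (sub_nonneg.mpr hγ1) hsk.le fun i hi =>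
    (mul_le_mul_of_nonneg_right (hlam (show (⟨s, hsn⟩ : Fin n) ≤ i from hi)) hx).trans
      hkey).trans (le_of_eq ?_)
  have hγ0 : γ ≠ 0 := (zero_lt_one.trans_le hγ1).ne'
  rw [hαinv, add_sub_cancel]
  field_simp
  ring

end Tuning

theorem dpp_error_and_size_general {m n : ℕ} (A : Matrix (Fin m) (Fin n) ℝ)
    (lam : Fin n → ℝ) (hlam : Antitone lam) (heig : IsEigs (Aᵀ * A) lam)
    (ε : ℝ) (hε0 : 0 ≤ ε) (hε1 : ε < 1)
    (s : ℕ) (hsn : s < n)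
    (k : ℕ) (hsk : s < k) (hkt : (k : ℝ) < (s : ℝ) + srank lam s hsn)
    (γ α : ℝ)
    (hγ : γ = Real.sqrt (1 + 2 * ((k : ℝ) - (s : ℝ)) / (((s : ℝ) + srank lam s hsn) - (k : ℝ))))
    (hα : α = γ * opt lam k / ((1 - ε) * ((k : ℝ) - (s : ℝ)))) :
    dppExp A α (Er A) ≤ (1 + (s : ℝ) / ((k : ℝ) - (s : ℝ))) * γ * opt lam k / (1 - ε) ∧
      dppExp A α (fun S => (S.card : ℝ)) ≤ (k : ℝ) - ε * ((k : ℝ) - (s : ℝ)) / γ := by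
  have hnn := heig.nonneg_of_transpose_mul_self
  have hks : (0 : ℝ) < k - s := sub_pos.mpr (by exact_mod_cast hsk)
  have hγ0 : 0 < γ := hγ ▸ Real.sqrt_pos.mpr (by have := sub_pos.mpr hkt; positivity)
  have hα0 : 0 < α := by
    have := opt_pos_of_lt_srank hsn hlam hnn hsk hkt
    have := sub_pos.mpr hε1
    rw [hα]
    positivity
  have hsize : dppExp A α (fun S => (S.card : ℝ)) ≤ k - ε * (k - s) / γ := by
    rw [dppExp_card_eq_sum heig hα0.le]
    exact sum_div_one_add_le_of_tuning hsn hlam hnn hε0 hε1 hsk hkt hγ hα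
  refine ⟨?_, hsize⟩
  calc dppExp A α (Er A) = α * dppExp A α (fun S => (S.card : ℝ)) :=
        dppExp_Er_eq_mul_dppExp_card A hα0.ne'
    _ ≤ α * k := by gcongr; exact hsize.trans (sub_le_self _ (by positivity))
    _ = (1 + s / (k - s)) * γ * opt lam k / (1 - ε) := by
      rw [hα]
      field_simp
      ring

/-- Random-size DPP error and size bound at the tuned rescaling `α = γ_s(k)·OPT_k/((1−ε)(k−s))`:
`E[Er_A(S)] ≤ (1 + s/(k−s))·γ_s(k)·OPT_k/(1−ε)` and `E[|S|] ≤ k − ε(k−s)/γ_s(k)`. -/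
theorem dpp_error_and_size {m n : ℕ} (A : Matrix (Fin m) (Fin n) ℝ)
    (lam : Fin n → ℝ) (hlam : Antitone lam) (heig : IsEigs (Aᵀ * A) lam)
    (ε : ℝ) (hε0 : 0 ≤ ε) (hε1 : ε < 1)
    (s : ℕ) (hsn : s < n) (hs : s < A.rank)
    (k : ℕ) (hsk : s < k) (hkt : (k : ℝ) < (s : ℝ) + srank lam s hsn)
    (γ α : ℝ)
    (hγ : γ = Real.sqrt (1 + 2 * ((k : ℝ) - (s : ℝ)) / (((s : ℝ) + srank lam s hsn) - (k : ℝ))))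
    (hα : α = γ * opt lam k / ((1 - ε) * ((k : ℝ) - (s : ℝ)))) :
    dppExp A α (Er A) ≤ (1 + (s : ℝ) / ((k : ℝ) - (s : ℝ))) * γ * opt lam k / (1 - ε) ∧
      dppExp A α (fun S => (S.card : ℝ)) ≤ (k : ℝ) - ε * ((k : ℝ) - (s : ℝ)) / γ :=
  dpp_error_and_size_general A lam hlam heig ε hε0 hε1 s hsn k hsk hkt γ α hγ hα

end CSSP
end

section
/- Orthogonal-simplex lower bound construction. Fix δ ∈ (0,1). Let a_{i,j} ∈ ℝ^m for i ∈ {1,...,t}, j ∈ {1,...,l_i} be unit vectors in general position such that Σ_{j=1}^{l_i} a_{i,j} = 0 for each i, and a_{i,j} ⟂ a_{i',j'} whenever i ≠ i'. Let v₁,...,v_t be unit vectors orthogonal to each other and to all the a_{i,j}. Then there exist positive scalars α_i, β_i for i ∈ {1,...,t} such that the matrix A whose columns are α_i·a_{i,j} + β_i·v_i (over all i, j) satisfies, for each i ∈ {1,...,t} and k_i = l₁ + ... + l_i − 1: min over subsets S of size k_i of Er_A(S)/OPT_{k_i} ≥ (1−δ)·l_i. -/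
open scoped BigOperators
open Matrix


namespace CSSP

variable {m n : ℕ}

/-! Give the columns of block `b` the squared weights `α_b² = q^(b+1)` and `β_b² = h q^(b+1)`,
with `q ≪ h ≪ 1`. For `k = l₁ + ⋯ + l_i - 1`, keeping the blocks before `i` and the `a`-part of
block `i` (of rank `l_i - 1`, as the `a_{i,j}` sum to zero) shows `OPT_k ≲ l_i β_i²`, the later
blocks being negligible. Any `S` of size `k` misses a column `p` of some block `b ≤ i`. The
residual of `p` dominates its component on block `b`, and since the `a_{b,j}` are in general
position with zero sum, that component has squared norm at least `(1 - δ/2) l_b² β_b²`, which is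
at least `(1 - δ/2) l_i² β_i²`. -/

theorem sub_mul_sq_le_mul_sq_add_mul_sq {μ H ε : ℝ} (hμ : 0 < μ) (hH : 0 ≤ H) (hε : 0 ≤ ε)
    (hHμ : H ≤ ε * μ) (L s : ℝ) : (1 - ε) * H * L ^ 2 ≤ μ * (L - s) ^ 2 + H * s ^ 2 := by
  have key : 0 ≤ (μ + H) * (μ * (L - s) ^ 2 + H * s ^ 2 - (1 - ε) * H * L ^ 2) := by
    have : (μ + H) * (μ * (L - s) ^ 2 + H * s ^ 2 - (1 - ε) * H * L ^ 2)
        = (μ * (L - s) - H * s) ^ 2 + H * L ^ 2 * ((ε * μ - H) + ε * H) := by ring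
    rw [this]
    have := sq_nonneg L
    have := sq_nonneg (μ * (L - s) - H * s)
    positivity
  exact sub_nonneg.mp ((mul_nonneg_iff_of_pos_left (by positivity)).mp key)

theorem exists_pos_le_one_mul_le {K ε : ℝ} (hK : 0 ≤ K) (hε : 0 < ε) :
    ∃ x > 0, x ≤ 1 ∧ K * x ≤ ε := by
  refine ⟨min 1 (ε / (K + 1)), by positivity, min_le_left _ _, ?_⟩
  calc K * min 1 (ε / (K + 1)) ≤ (K + 1) * (ε / (K + 1)) := by
        gcongr; · linarith
        exact min_le_right _ _
    _ = ε := mul_div_cancel₀ _ (by positivity)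

theorem exists_weight_params {M δ c : ℝ} (hM : 0 ≤ M) (hδ : 0 < δ) (hc : 0 < c) :
    ∃ h q : ℝ, 0 < h ∧ h ≤ 1 ∧ M ^ 2 * h ≤ δ / 2 * c ^ 2 ∧
      0 < q ∧ q ≤ 1 ∧ M ^ 2 * q ≤ 1 ∧ 4 * M * q ≤ δ * h := by
  obtain ⟨h, hh, hh1, hhM⟩ :=
    exists_pos_le_one_mul_le (sq_nonneg M) (by positivity : 0 < δ / 2 * c ^ 2)
  obtain ⟨q, hq, hq1, hqM⟩ := exists_pos_le_one_mul_le (K := M ^ 2 + 4 * M) (by positivity)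
    (lt_min one_pos (mul_pos hδ hh))
  exact ⟨h, q, hh, hh1, hhM, hq, hq1, by nlinarith [min_le_left 1 (δ * h)],
    by nlinarith [min_le_right 1 (δ * h)]⟩

theorem one_sub_mul_mul_add_le {δ h q Q L M T : ℝ} (hδ0 : 0 < δ) (hδ1 : δ < 1) (hh : 0 ≤ h)
    (hQ : 0 ≤ Q) (hL : 1 ≤ L) (hqM : 4 * M * q ≤ δ * h) (hT : T ≤ 2 * M * q * Q) :
    (1 - δ) * L * (L * (h * Q) + T) ≤ (1 - δ / 2) * L ^ 2 * (h * Q) := by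
  have hTQ : T ≤ δ * h / 2 * Q := hT.trans (by nlinarith)
  have : (1 - δ) * L * T ≤ δ / 2 * L ^ 2 * (h * Q) :=
    calc (1 - δ) * L * T ≤ (1 - δ) * L * (δ * h / 2 * Q) :=
          mul_le_mul_of_nonneg_left hTQ (by nlinarith)
      _ ≤ L ^ 2 * (δ * h / 2 * Q) := mul_le_mul_of_nonneg_right (by nlinarith) (by positivity)
      _ = δ / 2 * L ^ 2 * (h * Q) := by ring
  linear_combination this

section Simplex

variable {E : Type*} [NormedAddCommGroup E] [NormedSpace ℝ E] {d : ℕ}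

theorem eq_zero_of_sum_eq_zero_of_sum_smul_eq_zero {a : Fin d → E} (hsum : ∑ j, a j = 0)
    (hgen : ∀ j₀ : Fin d, LinearIndependent ℝ (fun j : {j // j ≠ j₀} => a (j : Fin d)))
    {y : Fin d → ℝ} (hy : ∑ j, y j = 0) (hya : ∑ j, y j • a j = 0) : y = 0 := by
  obtain _ | ⟨⟨j₀⟩⟩ := isEmpty_or_nonempty (Fin d)
  · exact Subsingleton.elim _ _
  have hconst : ∀ j, y j = y j₀ := by
    have hshift : ∑ j : {j // j ≠ j₀}, (y j - y j₀) • a j = 0 := by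
      rw [← Finset.sum_subtype (Finset.univ.erase j₀) (by simp) (fun j => (y j - y j₀) • a j),
        Finset.sum_erase _ (by simp)]
      simp [sub_smul, Finset.sum_sub_distrib, ← Finset.smul_sum, hsum, hya]
    intro j
    by_cases hj : j = j₀
    · rw [hj]
    · exact sub_eq_zero.mp (Fintype.linearIndependent_iff.mp (hgen j₀) _ hshift ⟨j, hj⟩)
  have : (d : ℝ) * y j₀ = 0 := by simpa [hconst] using hy
  ext j
  simpa [hconst j, Nat.cast_ne_zero.mpr (j₀.pos.ne')] using this

theorem exists_pos_mul_norm_le_norm_sum_smul {a : Fin d → E}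
    (ha : ∀ y : Fin d → ℝ, ∑ j, y j = 0 → ∑ j, y j • a j = 0 → y = 0) :
    ∃ c > 0, ∀ y : Fin d → ℝ, ∑ j, y j = 0 → c * ‖y‖ ≤ ‖∑ j, y j • a j‖ := by
  let f := (Fintype.linearCombination ℝ a).prod (Fintype.linearCombination ℝ fun _ => (1 : ℝ))
  have hf : ∀ y, f y = (∑ j, y j • a j, ∑ j, y j) := fun y => by
    simp [f, Fintype.linearCombination_apply]
  obtain ⟨K, hK, hanti⟩ := f.exists_antilipschitzWith <| LinearMap.ker_eq_bot'.mpr fun y hy => by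
    rw [hf, Prod.mk_eq_zero] at hy
    exact ha y hy.2 hy.1
  refine ⟨(K : ℝ)⁻¹, by positivity, fun y hy => ?_⟩
  have := hanti.le_mul_dist y 0
  rw [dist_zero_right, map_zero, dist_zero_right, hf, hy, Prod.norm_mk, norm_zero,
    max_eq_left (norm_nonneg _)] at this
  rw [inv_mul_le_iff₀ (by positivity)]
  exact this

theorem one_sub_mul_sq_le_of_apply_eq_one {a : Fin d → E} (hsum : ∑ j, a j = 0) {c : ℝ}
    (hcoer : ∀ y : Fin d → ℝ, ∑ j, y j = 0 → c * ‖y‖ ≤ ‖∑ j, y j • a j‖)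
    {x : Fin d → ℝ} {j₀ : Fin d} (hx : x j₀ = 1) {α β ε : ℝ} (hc : 0 < c) (hα : 0 < α) (hε : 0 ≤ ε)
    (hβ : (d : ℝ) ^ 2 * β ^ 2 ≤ ε * (c * α) ^ 2) :
    (1 - ε) * (d : ℝ) ^ 2 * β ^ 2 ≤ α ^ 2 * ‖∑ j, x j • a j‖ ^ 2 + β ^ 2 * (∑ j, x j) ^ 2 := by
  set L : ℝ := (d : ℝ)
  set s := ∑ j, x j
  have hL : 0 < L := Nat.cast_pos.mpr j₀.pos
  -- `y` has zero sum and `∑ y • a = L • ∑ x • a`, so coercivity bounds `|y j₀| = |L - s|`.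
  set y : Fin d → ℝ := fun j => L * x j - s
  have hy : ∑ j, y j = 0 := by
    simp [y, Finset.sum_sub_distrib, ← Finset.mul_sum, L, s]
  have hya : ∑ j, y j • a j = L • ∑ j, x j • a j := by
    simp [y, sub_smul, Finset.sum_sub_distrib, ← Finset.smul_sum, hsum, mul_smul]
  have hyj₀ : c * |L - s| ≤ L * ‖∑ j, x j • a j‖ := by
    have := hcoer y hy
    rw [hya, norm_smul, Real.norm_of_nonneg hL.le] at this
    calc c * |L - s| = c * ‖y j₀‖ := by simp [y, hx]
      _ ≤ c * ‖y‖ := mul_le_mul_of_nonneg_left (norm_le_pi_norm y j₀) hc.le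
      _ ≤ _ := this
  have hsq : c ^ 2 * (L - s) ^ 2 ≤ L ^ 2 * ‖∑ j, x j • a j‖ ^ 2 := by
    simpa [mul_pow, sq_abs] using pow_le_pow_left₀ (by positivity) hyj₀ 2
  have hquad := sub_mul_sq_le_mul_sq_add_mul_sq (μ := (c * α) ^ 2) (by positivity)
    (by positivity) hε hβ L s
  refine le_of_mul_le_mul_left ?_ (by positivity : 0 < L ^ 2)
  nlinarith [mul_le_mul_of_nonneg_left hsq (sq_nonneg α)]

end Simplex

theorem exists_pos_forall_mul_norm_le_norm_sum_smul {E κ : Type*} [NormedAddCommGroup E]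
    [NormedSpace ℝ E] [Finite κ] {d : κ → ℕ} {a : (b : κ) → Fin (d b) → E}
    (ha : ∀ b (y : Fin (d b) → ℝ), ∑ j, y j = 0 → ∑ j, y j • a b j = 0 → y = 0) :
    ∃ c > 0, ∀ b (y : Fin (d b) → ℝ), ∑ j, y j = 0 → c * ‖y‖ ≤ ‖∑ j, y j • a b j‖ := by
  choose c hc hcoer using fun b => exists_pos_mul_norm_le_norm_sum_smul (ha b)
  obtain ⟨c₀, hc₀le, hc₀⟩ := ((Filter.eventually_all.mpr fun b => eventually_le_nhds (hc b))
    |>.filter_mono nhdsWithin_le_nhds |>.and self_mem_nhdsWithin).exists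
    (f := nhdsWithin (0 : ℝ) (Set.Ioi 0))
  exact ⟨c₀, hc₀, fun b y hy => (mul_le_mul_of_nonneg_right (hc₀le b) (norm_nonneg y)).trans
    (hcoer b y hy)⟩

section InnerProduct

variable {E : Type*} [NormedAddCommGroup E] [InnerProductSpace ℝ E]

theorem sq_norm_smul_add_smul_of_inner_eq_zero {u w : E} (huw : inner ℝ u w = 0) (α β : ℝ) :
    ‖α • u + β • w‖ ^ 2 = α ^ 2 * ‖u‖ ^ 2 + β ^ 2 * ‖w‖ ^ 2 := by
  rw [norm_add_sq_real, real_inner_smul_left, real_inner_smul_right, huw, norm_smul, norm_smul]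
  simp [mul_pow]

theorem sq_norm_le_sq_norm_sum_of_inner_eq_zero {κ : Type*} [Fintype κ] {w : κ → E} {b : κ}
    (hw : ∀ b' ≠ b, inner ℝ (w b') (w b) = 0) : ‖w b‖ ^ 2 ≤ ‖∑ b', w b'‖ ^ 2 := by
  have hinner : inner ℝ (∑ b', w b') (w b) = ‖w b‖ ^ 2 := by
    rw [sum_inner, Finset.sum_eq_single b (fun b' _ hb' => hw b' hb') (by simp),
      real_inner_self_eq_norm_sq]
  have := hinner ▸ real_inner_le_norm (∑ b', w b') (w b)
  gcongr
  nlinarith [norm_nonneg (w b), norm_nonneg (∑ b', w b')]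

end InnerProduct

section Columns

variable {ι : Type*}

theorem col_sub (A B : Matrix (Fin m) ι ℝ) (p : ι) : col (A - B) p = col A p - col B p := by
  ext; simp [col]

theorem col_of (f : ι → EuclideanSpace ℝ (Fin m)) (p : ι) :
    col (Matrix.of fun x q => f q x) p = f p := by
  ext; simp [col]

theorem frobSq_eq_sum_sq_norm_col [Fintype ι] (M : Matrix (Fin m) ι ℝ) :
    frobSq M = ∑ p, ‖col M p‖ ^ 2 := by
  simp [frobSq, EuclideanSpace.norm_sq_eq, col, Finset.sum_comm (γ := Fin m)]

theorem optRank_le_frobSq_sub [Fintype ι] [DecidableEq ι] (A : Matrix (Fin m) ι ℝ)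
    {B : Matrix (Fin m) ι ℝ} {k : ℕ} (hB : B.rank ≤ k) : optRank A k ≤ frobSq (A - B) :=
  csInf_le ⟨0, by rintro _ ⟨B', -, rfl⟩; unfold frobSq; positivity⟩ ⟨B, hB, rfl⟩

theorem rank_le_card_of_col_mem_span [Fintype ι] (B : Matrix (Fin m) ι ℝ) (T : Finset ι)
    (hB : ∀ p, col B p ∈ Submodule.span ℝ (col B '' T)) : B.rank ≤ T.card := by
  let e := WithLp.linearEquiv 2 ℝ (Fin m → ℝ)
  have hspan : Submodule.span ℝ (Set.range Bᵀ) ≤ Submodule.span ℝ ↑(T.image fun p => Bᵀ p) := by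
    rw [Submodule.span_le]
    rintro _ ⟨p, rfl⟩
    have := Submodule.mem_map_of_mem (f := e.toLinearMap) (hB p)
    rw [← Submodule.span_image, Set.image_image] at this
    rw [Finset.coe_image]
    exact this
  rw [Matrix.rank_eq_finrank_span_cols]
  exact (Submodule.finrank_mono hspan).trans
    ((finrank_span_finset_le_card _).trans Finset.card_image_le)

theorem Er_nonneg [Fintype ι] (A : Matrix (Fin m) ι ℝ) (S : Finset ι) : 0 ≤ Er A S := by
  unfold Er; positivity

theorem exists_mem_colSpan_sq_norm_sub_le_Er [Fintype ι] (A : Matrix (Fin m) ι ℝ) (S : Finset ι)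
    (p : ι) :
    ∃ u ∈ colSpan A S, ‖col A p - u‖ ^ 2 ≤ Er A S :=
  ⟨_, Submodule.coe_mem _, Finset.single_le_sum (f := fun q => ‖col A q -
    ((colSpan A S).orthogonalProjectionOnto (col A q) : EuclideanSpace ℝ (Fin m))‖ ^ 2)
    (fun _ _ => by positivity) (Finset.mem_univ p)⟩

theorem exists_eq_sum_smul_col_of_mem_colSpan [Fintype ι] {A : Matrix (Fin m) ι ℝ}
    {S : Finset ι} {u : EuclideanSpace ℝ (Fin m)} (hu : u ∈ colSpan A S) :
    ∃ γ : ι → ℝ, (∀ p ∉ S, γ p = 0) ∧ u = ∑ p, γ p • col A p := by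
  have : {x | ∃ j ∈ S, x = col A j} = col A '' S := by
    ext; simp only [Set.mem_ofPred_eq, Set.mem_image, Finset.mem_coe, eq_comm]
  rw [colSpan, this, Finsupp.mem_span_image_iff_linearCombination] at hu
  obtain ⟨γ, hγS, rfl⟩ := hu
  exact ⟨γ, fun p hp => Finsupp.notMem_support_iff.mp fun h => hp (hγS h),
    by rw [Finsupp.linearCombination_apply, Finsupp.sum_fintype _ _ (by simp)]⟩

end Columns

section Blocks

variable {t : ℕ} {l : Fin t → ℕ} {a : (b : Fin t) → Fin (l b) → EuclideanSpace ℝ (Fin m)}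
  {v : Fin t → EuclideanSpace ℝ (Fin m)}

theorem sq_norm_block_le_sq_norm_sum
    (horth : ∀ (i i' : Fin t) (j : Fin (l i)) (j' : Fin (l i')),
      i ≠ i' → (inner ℝ (a i j) (a i' j') : ℝ) = 0)
    (hvunit : ∀ i, ‖v i‖ = 1)
    (hvorth : ∀ i i' : Fin t, i ≠ i' → (inner ℝ (v i) (v i') : ℝ) = 0)
    (hvaorth : ∀ (i i' : Fin t) (j : Fin (l i')), (inner ℝ (v i) (a i' j) : ℝ) = 0)
    (α β : Fin t → ℝ) (d : (b : Fin t) × Fin (l b) → ℝ) (b : Fin t) :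
    α b ^ 2 * ‖∑ j, d ⟨b, j⟩ • a b j‖ ^ 2 + β b ^ 2 * (∑ j, d ⟨b, j⟩) ^ 2 ≤
      ‖∑ p, d p • (α p.1 • a p.1 p.2 + β p.1 • v p.1)‖ ^ 2 := by
  set w : Fin t → EuclideanSpace ℝ (Fin m) :=
    fun b => α b • ∑ j, d ⟨b, j⟩ • a b j + (β b * ∑ j, d ⟨b, j⟩) • v b
  have hsplit : ∑ p, d p • (α p.1 • a p.1 p.2 + β p.1 • v p.1) = ∑ b, w b := by
    rw [Fintype.sum_sigma]
    refine Finset.sum_congr rfl fun b _ => ?_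
    simp only [w, smul_add, Finset.sum_add_distrib, Finset.smul_sum, smul_smul, Finset.mul_sum,
      Finset.sum_smul, mul_comm]
  have hav : ∀ b b' (x : Fin (l b) → ℝ), inner ℝ (∑ j, x j • a b j) (v b') = 0 := by
    intro b b' x
    refine (sum_inner _ _ _).trans (Finset.sum_eq_zero fun j _ => ?_)
    rw [real_inner_smul_left, real_inner_comm, hvaorth, mul_zero]
  have hw : ∀ b' ≠ b, inner ℝ (w b') (w b) = 0 := by
    intro b' hb'
    simp [w, inner_add_left, inner_add_right, real_inner_smul_right, inner_sum,
      horth _ _ _ _ hb', hvorth _ _ hb', hvaorth, real_inner_comm]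
  calc _ = ‖w b‖ ^ 2 := by
        rw [sq_norm_smul_add_smul_of_inner_eq_zero (hav b b _), hvunit]
        ring
    _ ≤ _ := hsplit ▸ sq_norm_le_sq_norm_sum_of_inner_eq_zero hw

theorem le_sq_norm_col_sub_of_notMem
    (hsum : ∀ i, ∑ j, a i j = 0)
    (horth : ∀ (i i' : Fin t) (j : Fin (l i)) (j' : Fin (l i')),
      i ≠ i' → (inner ℝ (a i j) (a i' j') : ℝ) = 0)
    (hvunit : ∀ i, ‖v i‖ = 1)
    (hvorth : ∀ i i' : Fin t, i ≠ i' → (inner ℝ (v i) (v i') : ℝ) = 0)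
    (hvaorth : ∀ (i i' : Fin t) (j : Fin (l i')), (inner ℝ (v i) (a i' j) : ℝ) = 0)
    {c : ℝ} (hc : 0 < c)
    (hcoer : ∀ b (y : Fin (l b) → ℝ), ∑ j, y j = 0 → c * ‖y‖ ≤ ‖∑ j, y j • a b j‖)
    {α β : Fin t → ℝ} {ε : ℝ} (hα : ∀ b, 0 < α b) (hε : 0 ≤ ε)
    (hβ : ∀ b, (l b : ℝ) ^ 2 * β b ^ 2 ≤ ε * (c * α b) ^ 2)
    {A : Matrix (Fin m) ((b : Fin t) × Fin (l b)) ℝ}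
    (hcol : ∀ p, col A p = α p.1 • a p.1 p.2 + β p.1 • v p.1)
    {S : Finset ((b : Fin t) × Fin (l b))} {p : (b : Fin t) × Fin (l b)} (hp : p ∉ S)
    {u : EuclideanSpace ℝ (Fin m)} (hu : u ∈ colSpan A S) :
    (1 - ε) * (l p.1 : ℝ) ^ 2 * β p.1 ^ 2 ≤ ‖col A p - u‖ ^ 2 := by
  classical
  obtain ⟨γ, hγ, rfl⟩ := exists_eq_sum_smul_col_of_mem_colSpan hu
  set d := fun q => (if q = p then 1 else 0) - γ q
  have hd : col A p - ∑ q, γ q • col A q = ∑ q, d q • (α q.1 • a q.1 q.2 + β q.1 • v q.1) := by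
    simp only [d, sub_smul, Finset.sum_sub_distrib, ite_smul, one_smul, zero_smul,
      Finset.sum_ite_eq', Finset.mem_univ, if_true, hcol]
  have hdp : d ⟨p.1, p.2⟩ = 1 := by simp [d, hγ p hp]
  rw [hd]
  exact (one_sub_mul_sq_le_of_apply_eq_one (hsum p.1) (hcoer p.1) hdp hc (hα _) hε (hβ _)).trans
    (sq_norm_block_le_sq_norm_sum horth hvunit hvorth hvaorth α β d p.1)

theorem card_filter_fst_le (l : Fin t → ℕ) (i : Fin t) :
    (Finset.univ.filter fun p : (b : Fin t) × Fin (l b) => p.1 ≤ i).card =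
      ∑ b ∈ Finset.Iic i, l b := by
  rw [show Finset.univ.filter (fun p : (b : Fin t) × Fin (l b) => p.1 ≤ i) =
      (Finset.Iic i).sigma fun _ => Finset.univ by ext; simp, Finset.card_sigma]
  simp

theorem exists_fst_le_notMem {i : Fin t} (hi : 0 < l i) {S : Finset ((b : Fin t) × Fin (l b))}
    (hS : S.card = (∑ b ∈ Finset.Iic i, l b) - 1) : ∃ p, p.1 ≤ i ∧ p ∉ S := by
  have hpos : l i ≤ ∑ b ∈ Finset.Iic i, l b :=
    Finset.single_le_sum (fun _ _ => Nat.zero_le _) (Finset.mem_Iic.mpr le_rfl)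
  obtain ⟨p, hp, hpS⟩ := Finset.exists_mem_notMem_of_card_lt_card
    (s := S) (t := Finset.univ.filter fun p : (b : Fin t) × Fin (l b) => p.1 ≤ i)
    (by rw [card_filter_fst_le, hS]; omega)
  exact ⟨p, (Finset.mem_filter.mp hp).2, hpS⟩

theorem rank_block_truncation_le (hsum : ∀ i, ∑ j, a i j = 0) (α : Fin t → ℝ)
    (A : Matrix (Fin m) ((b : Fin t) × Fin (l b)) ℝ) {i : Fin t} (hi : 0 < l i) :
    (Matrix.of fun x (p : (b : Fin t) × Fin (l b)) =>
      (if p.1 < i then col A p else if p.1 = i then α p.1 • a p.1 p.2 else 0) x).rank ≤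
      (∑ b ∈ Finset.Iic i, l b) - 1 := by
  set f : (b : Fin t) × Fin (l b) → EuclideanSpace ℝ (Fin m) :=
    fun p => if p.1 < i then col A p else if p.1 = i then α p.1 • a p.1 p.2 else 0
  set j₀ : Fin (l i) := ⟨0, hi⟩
  set T := (Finset.univ.filter fun p : (b : Fin t) × Fin (l b) => p.1 ≤ i).erase ⟨i, j₀⟩
  have hT : ∀ j ≠ j₀, f ⟨i, j⟩ ∈ Submodule.span ℝ (f '' T) := fun j hj =>
    Submodule.subset_span ⟨⟨i, j⟩, by simp [T, hj], rfl⟩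
  refine (rank_le_card_of_col_mem_span _ T fun p => ?_).trans ?_
  · change f p ∈ Submodule.span ℝ (f '' T)
    by_cases hpT : p ∈ T
    · exact Submodule.subset_span ⟨p, hpT, rfl⟩
    by_cases hp : p = ⟨i, j₀⟩
    · have hf : f ⟨i, j₀⟩ = -∑ j ∈ Finset.univ.erase j₀, f ⟨i, j⟩ := by
        simp [f, ← Finset.smul_sum, Finset.sum_erase_eq_sub, hsum]
      rw [hp, hf]
      exact Submodule.neg_mem _ (Submodule.sum_mem _ fun j hj => hT j (Finset.ne_of_mem_erase hj))
    · have : ¬ p.1 ≤ i := by simpa [T, hp] using hpT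
      simp [f, (lt_of_not_ge this).ne', (lt_of_not_ge this).not_gt]
  · rw [Finset.card_erase_of_mem (by simp), card_filter_fst_le]

theorem optRank_le_of_col_eq (hsum : ∀ i, ∑ j, a i j = 0) (hunit : ∀ i j, ‖a i j‖ = 1)
    (hvunit : ∀ i, ‖v i‖ = 1)
    (hvaorth : ∀ (i i' : Fin t) (j : Fin (l i')), (inner ℝ (v i) (a i' j) : ℝ) = 0)
    {α β : Fin t → ℝ} {A : Matrix (Fin m) ((b : Fin t) × Fin (l b)) ℝ}
    (hcol : ∀ p, col A p = α p.1 • a p.1 p.2 + β p.1 • v p.1) {i : Fin t} (hi : 0 < l i) :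
    optRank A ((∑ b ∈ Finset.Iic i, l b) - 1) ≤
      l i * β i ^ 2 + ∑ b ∈ Finset.Ioi i, l b * (α b ^ 2 + β b ^ 2) := by
  set B : Matrix (Fin m) ((b : Fin t) × Fin (l b)) ℝ := Matrix.of fun x p =>
    (if p.1 < i then col A p else if p.1 = i then α p.1 • a p.1 p.2 else 0) x with hB
  refine (optRank_le_frobSq_sub A (rank_block_truncation_le hsum α A hi)).trans (le_of_eq ?_)
  set g : Fin t → ℝ := fun b =>
    if b < i then 0 else if b = i then β b ^ 2 else α b ^ 2 + β b ^ 2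
  have hg : ∀ p : (b : Fin t) × Fin (l b), ‖col (A - B) p‖ ^ 2 = g p.1 := by
    rintro ⟨b, j⟩
    rw [col_sub, hB, col_of, hcol]
    rcases lt_trichotomy b i with hb | rfl | hb
    · simp [g, hb]
    · simp [g, norm_smul, hvunit]
    · simp only [g, hb.not_gt, hb.ne', if_false, sub_zero]
      rw [sq_norm_smul_add_smul_of_inner_eq_zero (by rw [real_inner_comm, hvaorth]), hunit, hvunit]
      ring
  rw [frobSq_eq_sum_sq_norm_col, Fintype.sum_congr _ _ hg, Fintype.sum_sigma]
  simp only [Finset.sum_const, Finset.card_univ, Fintype.card_fin, nsmul_eq_mul]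
  rw [← Finset.sum_subset (Finset.subset_univ (Finset.Ici i)) fun b _ hb => by
      simp [g, lt_of_not_ge (by simpa using hb)],
    ← Finset.Ioi_insert, Finset.sum_insert (by simp)]
  congr 1
  · simp [g]
  · exact Finset.sum_congr rfl fun b hb => by
      simp [g, (Finset.mem_Ioi.mp hb).not_gt, (Finset.mem_Ioi.mp hb).ne']

end Blocks

section Weights

variable {t : ℕ} {l : Fin t → ℕ} {h q : ℝ}

theorem sum_Ioi_mul_sq_add_sq_le {α β : Fin t → ℝ} (hh1 : h ≤ 1) (hq : 0 ≤ q) (hq1 : q ≤ 1)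
    (hα : ∀ b, α b ^ 2 = q ^ ((b : ℕ) + 1)) (hβ : ∀ b, β b ^ 2 = h * q ^ ((b : ℕ) + 1))
    (i : Fin t) :
    ∑ b ∈ Finset.Ioi i, (l b : ℝ) * (α b ^ 2 + β b ^ 2) ≤
      2 * (∑ b, (l b : ℝ)) * q * q ^ ((i : ℕ) + 1) := by
  calc ∑ b ∈ Finset.Ioi i, (l b : ℝ) * (α b ^ 2 + β b ^ 2)
      ≤ ∑ b ∈ Finset.Ioi i, (l b : ℝ) * (2 * (q * q ^ ((i : ℕ) + 1))) := by
        refine Finset.sum_le_sum fun b hb => ?_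
        have : q ^ ((b : ℕ) + 1) ≤ q * q ^ ((i : ℕ) + 1) := by
          rw [← pow_succ']
          exact pow_le_pow_of_le_one hq hq1 (by have := Finset.mem_Ioi.mp hb; omega)
        rw [hα, hβ]
        gcongr
        nlinarith [pow_nonneg hq ((b : ℕ) + 1)]
    _ ≤ ∑ b, (l b : ℝ) * (2 * (q * q ^ ((i : ℕ) + 1))) :=
        Finset.sum_le_sum_of_subset_of_nonneg (Finset.subset_univ _) fun _ _ _ => by positivity
    _ = 2 * (∑ b, (l b : ℝ)) * q * q ^ ((i : ℕ) + 1) := by rw [← Finset.sum_mul]; ring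

theorem sq_mul_pow_le_mul_sq_mul_pow {c ε : ℝ} (hh : 0 ≤ h) (hq : 0 ≤ q)
    (hhc : (∑ b, (l b : ℝ)) ^ 2 * h ≤ ε * c ^ 2) (b : Fin t) :
    (l b : ℝ) ^ 2 * (h * q ^ ((b : ℕ) + 1)) ≤ ε * (c ^ 2 * q ^ ((b : ℕ) + 1)) := by
  have hlb : (l b : ℝ) ^ 2 ≤ (∑ b, (l b : ℝ)) ^ 2 := by
    gcongr
    exact Finset.single_le_sum (fun _ _ => Nat.cast_nonneg _) (Finset.mem_univ b)
  calc (l b : ℝ) ^ 2 * (h * q ^ ((b : ℕ) + 1)) ≤ (∑ b, (l b : ℝ)) ^ 2 * h * q ^ ((b : ℕ) + 1) := by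
        rw [← mul_assoc]; gcongr
    _ ≤ ε * c ^ 2 * q ^ ((b : ℕ) + 1) := by gcongr
    _ = ε * (c ^ 2 * q ^ ((b : ℕ) + 1)) := by ring

theorem sq_mul_mul_pow_le_of_le (hh : 0 ≤ h) (hq : 0 ≤ q) (hq1 : q ≤ 1)
    (hqM : (∑ b, (l b : ℝ)) ^ 2 * q ≤ 1) {b i : Fin t} (hbi : b ≤ i) (hb : 0 < l b) :
    (l i : ℝ) ^ 2 * (h * q ^ ((i : ℕ) + 1)) ≤ (l b : ℝ) ^ 2 * (h * q ^ ((b : ℕ) + 1)) := by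
  rcases hbi.eq_or_lt with rfl | hbi
  · rfl
  have hli : (l i : ℝ) ^ 2 ≤ (∑ b, (l b : ℝ)) ^ 2 := by
    gcongr
    exact Finset.single_le_sum (fun _ _ => Nat.cast_nonneg _) (Finset.mem_univ i)
  have hlb : (1 : ℝ) ≤ (l b : ℝ) ^ 2 := by exact_mod_cast Nat.one_le_pow _ _ hb
  have hpow : q ^ ((i : ℕ) + 1) ≤ q * q ^ ((b : ℕ) + 1) := by
    rw [← pow_succ']
    exact pow_le_pow_of_le_one hq hq1 (by have : (b : ℕ) < i := hbi; omega)
  calc (l i : ℝ) ^ 2 * (h * q ^ ((i : ℕ) + 1))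
      ≤ (∑ b, (l b : ℝ)) ^ 2 * (h * (q * q ^ ((b : ℕ) + 1))) := by gcongr
    _ = h * q ^ ((b : ℕ) + 1) * ((∑ b, (l b : ℝ)) ^ 2 * q) := by ring
    _ ≤ h * q ^ ((b : ℕ) + 1) * 1 := by gcongr
    _ ≤ (l b : ℝ) ^ 2 * (h * q ^ ((b : ℕ) + 1)) := by
        rw [mul_one]; exact le_mul_of_one_le_left (by positivity) hlb

end Weights

/-- Orthogonal-simplex lower bound construction (Lemma 6 of the paper). -/
theorem simplex_lower_bound (m t : ℕ) (l : Fin t → ℕ)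
    (δ : ℝ) (hδ0 : 0 < δ) (hδ1 : δ < 1)
    (a : (i : Fin t) → Fin (l i) → EuclideanSpace ℝ (Fin m))
    (hunit : ∀ i j, ‖a i j‖ = 1)
    (hsum : ∀ i, ∑ j, a i j = 0)
    (horth : ∀ (i i' : Fin t) (j : Fin (l i)) (j' : Fin (l i')),
      i ≠ i' → (inner ℝ (a i j) (a i' j') : ℝ) = 0)
    (hgen : ∀ (i : Fin t) (j₀ : Fin (l i)),
      LinearIndependent ℝ (fun j : {j : Fin (l i) // j ≠ j₀} => a i (j : Fin (l i))))
    (v : Fin t → EuclideanSpace ℝ (Fin m))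
    (hvunit : ∀ i, ‖v i‖ = 1)
    (hvorth : ∀ i i' : Fin t, i ≠ i' → (inner ℝ (v i) (v i') : ℝ) = 0)
    (hvaorth : ∀ (i i' : Fin t) (j : Fin (l i')), (inner ℝ (v i) (a i' j) : ℝ) = 0) :
    ∃ α β : Fin t → ℝ, (∀ i, 0 < α i) ∧ (∀ i, 0 < β i) ∧
      ∀ (A : Matrix (Fin m) ((i : Fin t) × Fin (l i)) ℝ),
        (∀ (p : (i : Fin t) × Fin (l i)) (x : Fin m),
          A x p = α p.1 * a p.1 p.2 x + β p.1 * v p.1 x) →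
        ∀ i : Fin t, ∀ S : Finset ((i' : Fin t) × Fin (l i')),
          S.card = (∑ i' ∈ Finset.Iic i, l i') - 1 →
          (1 - δ) * (l i : ℝ) * optRank A ((∑ i' ∈ Finset.Iic i, l i') - 1) ≤ Er A S := by
  obtain ⟨c, hc, hcoer⟩ := exists_pos_forall_mul_norm_le_norm_sum_smul fun b _ =>
    eq_zero_of_sum_eq_zero_of_sum_smul_eq_zero (hsum b) (hgen b)
  obtain ⟨h, q, hh, hh1, hhM, hq, hq1, hqM₁, hqM₂⟩ :=
    exists_weight_params (M := ∑ b, (l b : ℝ)) (by positivity) hδ0 hc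
  set α : Fin t → ℝ := fun b => √(q ^ ((b : ℕ) + 1))
  set β : Fin t → ℝ := fun b => √(h * q ^ ((b : ℕ) + 1))
  have hα : ∀ b, α b ^ 2 = q ^ ((b : ℕ) + 1) := fun b => Real.sq_sqrt (by positivity)
  have hβ : ∀ b, β b ^ 2 = h * q ^ ((b : ℕ) + 1) := fun b => Real.sq_sqrt (by positivity)
  refine ⟨α, β, fun b => by positivity, fun b => by positivity, fun A hA i S hS => ?_⟩
  have hcol : ∀ p, col A p = α p.1 • a p.1 p.2 + β p.1 • v p.1 := fun p => by
    ext x; simp [col, hA]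
  rcases (l i).eq_zero_or_pos with hi | hi
  · simpa [hi] using Er_nonneg A S
  obtain ⟨p, hpi, hpS⟩ := exists_fst_le_notMem hi hS
  obtain ⟨u, hu, huEr⟩ := exists_mem_colSpan_sq_norm_sub_le_Er A S p
  calc (1 - δ) * (l i : ℝ) * optRank A ((∑ i' ∈ Finset.Iic i, l i') - 1)
      ≤ (1 - δ) * l i * (l i * β i ^ 2 + ∑ b ∈ Finset.Ioi i, l b * (α b ^ 2 + β b ^ 2)) :=
        mul_le_mul_of_nonneg_left (optRank_le_of_col_eq hsum hunit hvunit hvaorth hcol hi)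
          (mul_nonneg (by linarith) (Nat.cast_nonneg _))
    _ ≤ (1 - δ / 2) * (l i : ℝ) ^ 2 * β i ^ 2 := by
        rw [hβ]
        exact one_sub_mul_mul_add_le hδ0 hδ1 hh.le (by positivity) (by exact_mod_cast hi)
          hqM₂ (sum_Ioi_mul_sq_add_sq_le hh1 hq.le hq1 hα hβ i)
    _ ≤ (1 - δ / 2) * (l p.1 : ℝ) ^ 2 * β p.1 ^ 2 := by
        rw [hβ, hβ, mul_assoc, mul_assoc]
        exact mul_le_mul_of_nonneg_left (sq_mul_mul_pow_le_of_le hh.le hq.le hq1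
          hqM₁ hpi p.2.pos) (by linarith)
    _ ≤ ‖col A p - u‖ ^ 2 := le_sq_norm_col_sub_of_notMem hsum horth hvunit hvorth hvaorth hc
          hcoer (fun b => by positivity) (by positivity) (fun b => by
            rw [mul_pow, hα, hβ]; exact sq_mul_pow_le_mul_sq_mul_pow hh.le hq.le hhM b) hcol hpS hu
    _ ≤ Er A S := huEr

end CSSP
end
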